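/- (Content of Lemma 3.1 of the paper, 'lemma on finite groups', in filtration form.) Let K be a field of characteristic p > 0, let Γ be a finitely generated group, let V be a finite-dimensional K-vector space, and let ρ : Γ → GL(V) be a representation. Suppose there exists a finite chain of K-subspaces 0 = V₀ ⊆ V₁ ⊆ ⋯ ⊆ V_m = V, each of which is invariant under ρ(γ) for every γ ∈ Γ, such that for each i the induced representation of Γ on the quotient V_{i+1}/V_i has finite image. Then the image ρ(Γ) is a finite group. (In the paper this is stated as: a representation of a finitely generated group over a field of positive characteristic whose semisimplification has finite image itself has finite image.) -/

import Mathlib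

/-!
The elements of `Γ` acting trivially on every quotient `W (i+1) / W i` form a subgroup of finite
index, hence a finitely generated one (Schreier). Induct along the filtration: if `H` acts
trivially on `U₂ / U₁` and on `U₁ / U₀`, then `γ ↦ (ρ γ - 1) mod U₀` on `U₂` is a homomorphism
from `H` to an abelian group killed by `p`, so its image is finite and its kernel, the elements
acting trivially on `U₂ / U₀`, has finite index. At the end of the filtration this kernel is
`ker ρ`.
-/

theorem MonoidHom.finiteIndex_ker_of_nsmul_eq_zero {G M : Type*} [Group G] [Group.FG G]
    [AddCommGroup M] {p : ℕ} (hp : p ≠ 0) (hM : ∀ x : M, p • x = 0)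
    (f : G →* Multiplicative M) : f.ker.FiniteIndex := by
  have htorsion : IsMulTorsion f.range := fun x =>
    isOfFinOrder_iff_pow_eq_one.mpr ⟨p, Nat.pos_of_ne_zero hp, Subtype.ext (hM x.1.toAdd)⟩
  have := CommGroup.finite_of_fg_isMulTorsion f.range htorsion
  infer_instance

theorem Subgroup.finiteIndex_of_finiteIndex_subgroupOf {G : Type*} [Group G] {H K : Subgroup G}
    [K.FiniteIndex] [(H.subgroupOf K).FiniteIndex] : H.FiniteIndex := by
  rw [finiteIndex_iff, ← relIndex_top_right]
  exact relIndex_ne_zero_trans (FiniteIndex.index_ne_zero (H := H.subgroupOf K))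
    (by rw [relIndex_top_right]; exact FiniteIndex.index_ne_zero)

section

variable {K Γ V : Type*} [Ring K] [Group Γ] [AddCommGroup V] [Module K V]

def IsInvariantSubmodule (ρ : Γ →* (V ≃ₗ[K] V)) (U : Submodule K V) : Prop :=
  ∀ γ, ∀ v ∈ U, ρ γ v ∈ U

variable {ρ : Γ →* (V ≃ₗ[K] V)} {U U' U₀ U₁ U₂ : Submodule K V}

theorem map_mul_apply_sub_self (γ δ : Γ) (v : V) :
    ρ (γ * δ) v - v = ρ γ (ρ δ v - v) + (ρ γ v - v) := by
  simp

theorem map_inv_apply_sub_self (γ : Γ) (v : V) : ρ γ⁻¹ v - v = -ρ γ⁻¹ (ρ γ v - v) := by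
  simp

variable (ρ) in
def fixingSubgroupMod (hU' : IsInvariantSubmodule ρ U') (U : Submodule K V) : Subgroup Γ where
  carrier := {γ | ∀ v ∈ U, ρ γ v - v ∈ U'}
  one_mem' v _ := by simp
  mul_mem' {γ δ} hγ hδ v hv := by
    rw [map_mul_apply_sub_self]
    exact U'.add_mem (hU' γ _ (hδ v hv)) (hγ v hv)
  inv_mem' {γ} hγ v hv := by
    rw [map_inv_apply_sub_self]
    exact U'.neg_mem (hU' γ⁻¹ _ (hγ v hv))

theorem inv_mul_mem_fixingSubgroupMod (hU' : IsInvariantSubmodule ρ U') {γ δ : Γ}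
    (h : ∀ v ∈ U, ρ δ v - ρ γ v ∈ U') : γ⁻¹ * δ ∈ fixingSubgroupMod ρ hU' U := by
  intro v hv
  have : ρ (γ⁻¹ * δ) v - v = ρ γ⁻¹ (ρ δ v - ρ γ v) := by simp
  rw [this]
  exact hU' γ⁻¹ _ (h v hv)

theorem finiteIndex_fixingSubgroupMod_of_exists_finset (hU' : IsInvariantSubmodule ρ U')
    (hT : ∃ T : Finset Γ, ∀ γ, ∃ t ∈ T, ∀ v ∈ U, ρ γ v - ρ t v ∈ U') :
    (fixingSubgroupMod ρ hU' U).FiniteIndex := by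
  obtain ⟨T, hT⟩ := hT
  refine Subgroup.finiteIndex_of_leftCoset_cover_const (s := T) (g := id) ?_
  refine Set.eq_univ_of_forall fun γ => ?_
  obtain ⟨t, ht, hγ⟩ := hT γ
  exact Set.mem_biUnion ht ((mem_leftCoset_iff t).mpr (inv_mul_mem_fixingSubgroupMod hU' hγ))

theorem fixingSubgroupMod_self (hU : IsInvariantSubmodule ρ U) : fixingSubgroupMod ρ hU U = ⊤ :=
  eq_top_iff.mpr fun γ _ v hv => U.sub_mem (hU γ v hv) hv

theorem fixingSubgroupMod_le_ker (hU' : IsInvariantSubmodule ρ U') (htop : U = ⊤) (hbot : U' = ⊥) :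
    fixingSubgroupMod ρ hU' U ≤ ρ.ker := by
  subst htop hbot
  intro γ hγ
  ext v
  simpa [sub_eq_zero] using hγ v Submodule.mem_top

theorem fixingSubgroupMod_comp_subtype (hU' : IsInvariantSubmodule ρ U') (H : Subgroup Γ) :
    fixingSubgroupMod (ρ.comp H.subtype) (fun γ => hU' γ) U =
      (fixingSubgroupMod ρ hU' U).subgroupOf H :=
  rfl

variable (ρ) in
def displacement (h₂₁ : ∀ γ, ∀ v ∈ U₂, ρ γ v - v ∈ U₁) (h₁₀ : ∀ γ, ∀ v ∈ U₁, ρ γ v - v ∈ U₀) :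
    Γ →* Multiplicative (U₂ → V ⧸ U₀) where
  toFun γ := .ofAdd fun v => U₀.mkQ (ρ γ v - v)
  map_one' := by ext; simp
  map_mul' γ δ := funext fun v => by
    have : U₀.mkQ (ρ γ (ρ δ v - v)) = U₀.mkQ (ρ δ v - v) := by
      rw [← sub_eq_zero, ← map_sub, Submodule.mkQ_apply, Submodule.Quotient.mk_eq_zero]
      exact h₁₀ γ _ (h₂₁ δ v v.2)
    change U₀.mkQ (ρ (γ * δ) v - v) = U₀.mkQ (ρ γ v - v) + U₀.mkQ (ρ δ v - v)
    rw [map_mul_apply_sub_self, map_add, this, add_comm]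

theorem ker_displacement (hU₀ : IsInvariantSubmodule ρ U₀) (h₂₁ : ∀ γ, ∀ v ∈ U₂, ρ γ v - v ∈ U₁)
    (h₁₀ : ∀ γ, ∀ v ∈ U₁, ρ γ v - v ∈ U₀) :
    (displacement ρ h₂₁ h₁₀).ker = fixingSubgroupMod ρ hU₀ U₂ := by
  ext γ
  change (fun v : U₂ => U₀.mkQ (ρ γ v - v)) = 0 ↔ ∀ v ∈ U₂, ρ γ v - v ∈ U₀
  simp only [funext_iff, Pi.zero_apply, Submodule.mkQ_apply, Submodule.Quotient.mk_eq_zero,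
    Subtype.forall]

variable [Group.FG Γ] {p : ℕ} [CharP K p]

theorem finiteIndex_fixingSubgroupMod_of_unipotent (hp : p ≠ 0) (hU₀ : IsInvariantSubmodule ρ U₀)
    (h₂₁ : ∀ γ, ∀ v ∈ U₂, ρ γ v - v ∈ U₁) (h₁₀ : ∀ γ, ∀ v ∈ U₁, ρ γ v - v ∈ U₀) :
    (fixingSubgroupMod ρ hU₀ U₂).FiniteIndex := by
  rw [← ker_displacement hU₀ h₂₁ h₁₀]
  refine MonoidHom.finiteIndex_ker_of_nsmul_eq_zero hp (fun f => funext fun v => ?_) _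
  rw [Pi.smul_apply, ← Nat.cast_smul_eq_nsmul K, CharP.cast_eq_zero, zero_smul, Pi.zero_apply]

theorem finiteIndex_fixingSubgroupMod_trans (hp : p ≠ 0) (hU₀ : IsInvariantSubmodule ρ U₀)
    (hU₁ : IsInvariantSubmodule ρ U₁) (h₂₁ : (fixingSubgroupMod ρ hU₁ U₂).FiniteIndex)
    (h₁₀ : (fixingSubgroupMod ρ hU₀ U₁).FiniteIndex) :
    (fixingSubgroupMod ρ hU₀ U₂).FiniteIndex := by
  set H := fixingSubgroupMod ρ hU₁ U₂ ⊓ fixingSubgroupMod ρ hU₀ U₁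
  have : (fixingSubgroupMod (ρ.comp H.subtype) (fun γ => hU₀ γ) U₂).FiniteIndex :=
    finiteIndex_fixingSubgroupMod_of_unipotent hp _ (fun γ => γ.2.1) (fun γ => γ.2.2)
  rw [fixingSubgroupMod_comp_subtype] at this
  exact Subgroup.finiteIndex_of_finiteIndex_subgroupOf (K := H)

theorem finiteIndex_fixingSubgroupMod_of_chain (hp : p ≠ 0) {m : ℕ}
    (W : Fin (m + 1) → Submodule K V) (hW : ∀ i, IsInvariantSubmodule ρ (W i))
    (hstep : ∀ i : Fin m, (fixingSubgroupMod ρ (hW i.castSucc) (W i.succ)).FiniteIndex)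
    (j : Fin (m + 1)) : (fixingSubgroupMod ρ (hW 0) (W j)).FiniteIndex := by
  induction j using Fin.induction with
  | zero => rw [fixingSubgroupMod_self]; infer_instance
  | succ i ih => exact finiteIndex_fixingSubgroupMod_trans hp (hW 0) (hW i.castSucc) (hstep i) ih

end

theorem finite_image_of_filtration_general
    {K : Type*} [Field K] {p : ℕ} (hp : p ≠ 0) [CharP K p]
    {Γ : Type*} [Group Γ] [Group.FG Γ]
    {V : Type*} [AddCommGroup V] [Module K V]
    (ρ : Γ →* (V ≃ₗ[K] V)) (m : ℕ) (W : Fin (m + 1) → Submodule K V)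
    (hW0 : W 0 = ⊥) (hWtop : W (Fin.last m) = ⊤)
    (hinv : ∀ (γ : Γ) (i : Fin (m + 1)), ∀ v ∈ W i, ρ γ v ∈ W i)
    (hquot : ∀ i : Fin m, ∃ T : Finset Γ, ∀ γ : Γ, ∃ t ∈ T,
      ∀ v ∈ W i.succ, ρ γ v - ρ t v ∈ W i.castSucc) :
    Set.Finite (Set.range fun γ : Γ => ρ γ) := by
  have hW : ∀ i, IsInvariantSubmodule ρ (W i) := fun i γ => hinv γ i
  have hstep (i : Fin m) : (fixingSubgroupMod ρ (hW i.castSucc) (W i.succ)).FiniteIndex :=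
    finiteIndex_fixingSubgroupMod_of_exists_finset _ (hquot i)
  have hfix := finiteIndex_fixingSubgroupMod_of_chain hp W hW hstep (Fin.last m)
  have hker : ρ.ker.FiniteIndex :=
    Subgroup.finiteIndex_of_le (fixingSubgroupMod_le_ker (hW 0) hWtop hW0)
  have : Finite ρ.range := Nat.finite_of_card_ne_zero (Subgroup.index_ker ρ ▸ hker.index_ne_zero)
  rw [← MonoidHom.coe_range]
  exact Set.toFinite _

/-- A representation of a finitely generated group over a field of positive
characteristic, admitting an invariant filtration `0 = V₀ ⊆ V₁ ⊆ ⋯ ⊆ V_m = V`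
such that the induced representation on each successive quotient `V_{i+1}/V_i`
has finite image, itself has finite image.  (The finiteness of the image of the
induced representation on `V_{i+1}/V_i` is expressed by the existence of a
finite set `T ⊆ Γ` such that every `γ ∈ Γ` agrees with some `t ∈ T` on
`V_{i+1}` modulo `V_i`.) -/
theorem finite_image_of_filtration
    {K : Type*} [Field K] {p : ℕ} (hp : p ≠ 0) [CharP K p]
    {Γ : Type*} [Group Γ] [Group.FG Γ]
    {V : Type*} [AddCommGroup V] [Module K V] [FiniteDimensional K V]
    (ρ : Γ →* (V ≃ₗ[K] V)) (m : ℕ) (W : Fin (m + 1) → Submodule K V)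
    (hW0 : W 0 = ⊥) (hWtop : W (Fin.last m) = ⊤) (hmono : Monotone W)
    (hinv : ∀ (γ : Γ) (i : Fin (m + 1)), ∀ v ∈ W i, ρ γ v ∈ W i)
    (hquot : ∀ i : Fin m, ∃ T : Finset Γ, ∀ γ : Γ, ∃ t ∈ T,
      ∀ v ∈ W i.succ, ρ γ v - ρ t v ∈ W i.castSucc) :
    Set.Finite (Set.range fun γ : Γ => ρ γ) :=
  finite_image_of_filtration_general hp ρ m W hW0 hWtop hinv hquot
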